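/- Factorization of the block Toeplitz determinant with off-diagonal symbol (equation for det A_N). Let u be any integrable complex-valued function on the unit circle, and let Φ be the 2×2-matrix-valued symbol on the unit circle defined by Φ(e^{iθ}) = [[0, u(e^{iθ})], [−u(e^{−iθ}), 0]]. Then for every integer N ≥ 1, D_N[Φ] = (D_N[u])². -/

import Mathlib

open scoped BigOperators
open Filter

/-- The `k`-th Fourier coefficient of a symbol `t` on the unit circle. -/
noncomputable def symbolCoeff (t : ℂ → ℂ) (k : ℤ) : ℂ :=
  (1 / (2 * Real.pi)) *
    ∫ θ in (0:ℝ)..(2 * Real.pi),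
      t (Complex.exp (Complex.I * (θ : ℂ))) * Complex.exp (-(Complex.I * (k : ℂ) * (θ : ℂ)))

/-- The `N × N` Toeplitz determinant `D_N[t]` generated by the symbol `t`. -/
noncomputable def toeplitzDet (t : ℂ → ℂ) (N : ℕ) : ℂ :=
  Matrix.det (Matrix.of fun m n : Fin N => symbolCoeff t ((m : ℤ) - (n : ℤ)))

/-- The `k`-th (matrix) Fourier coefficient of a `2 × 2`-matrix-valued symbol. -/
noncomputable def blockSymbolCoeff (Φ : ℂ → Matrix (Fin 2) (Fin 2) ℂ) (k : ℤ) :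
    Matrix (Fin 2) (Fin 2) ℂ :=
  Matrix.of fun i j => symbolCoeff (fun w => Φ w i j) k

/-- The `2N × 2N` block Toeplitz determinant `D_N[Φ]` generated by the
`2 × 2`-matrix-valued symbol `Φ`. -/
noncomputable def blockToeplitzDet (Φ : ℂ → Matrix (Fin 2) (Fin 2) ℂ) (N : ℕ) : ℂ :=
  Matrix.det (Matrix.of fun p q : Fin N × Fin 2 =>
    blockSymbolCoeff Φ ((p.1 : ℤ) - (q.1 : ℤ)) p.2 q.2)

/-! Swapping the two rows of every `2 × 2` block turns the block Toeplitz matrix of `Φ` into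
the block diagonal matrix `diag(-Aᵀ, A)`, where `A = (u_{m-n})` is the Toeplitz matrix of `u`:
the lower-left entry of `Φ_k` is `-u_{-k}`, by the reflection `θ ↦ 2π - θ`. The `N` row swaps
and the sign of `det(-Aᵀ)` each contribute a factor `(-1)^N`. -/

open Complex Matrix

lemma symbolCoeff_eq_integral_zpow (t : ℂ → ℂ) (k : ℤ) :
    symbolCoeff t k =
      (1 / (2 * Real.pi)) * ∫ θ in (0:ℝ)..(2 * Real.pi), t (exp (I * θ)) * exp (I * θ) ^ (-k) := by
  simp only [symbolCoeff, ← exp_int_mul]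
  congr 2 with θ
  push_cast
  ring_nf

lemma exp_I_mul_two_pi_sub (θ : ℝ) : exp (I * ((2 * Real.pi - θ : ℝ) : ℂ)) = (exp (I * θ))⁻¹ := by
  push_cast
  rw [mul_sub, exp_sub, mul_comm I, exp_two_pi_mul_I, one_div]

lemma symbolCoeff_zero (k : ℤ) : symbolCoeff (fun _ => 0) k = 0 := by
  simp [symbolCoeff]

lemma symbolCoeff_neg (t : ℂ → ℂ) (k : ℤ) :
    symbolCoeff (fun w => -t w) k = -symbolCoeff t k := by
  simp only [symbolCoeff, neg_mul, intervalIntegral.integral_neg, mul_neg]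

lemma symbolCoeff_comp_inv (t : ℂ → ℂ) (k : ℤ) :
    symbolCoeff (fun w => t w⁻¹) k = symbolCoeff t (-k) := by
  rw [symbolCoeff_eq_integral_zpow, symbolCoeff_eq_integral_zpow]
  congr 1
  have reflect := intervalIntegral.integral_comp_sub_left
    (fun θ : ℝ => t (exp (I * θ)) * exp (I * θ) ^ (-(-k))) (a := 0) (b := 2 * Real.pi)
    (2 * Real.pi)
  rw [sub_self, sub_zero] at reflect
  rw [← reflect]
  congr 1 with θ
  rw [exp_I_mul_two_pi_sub, neg_neg, _root_.inv_zpow']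

lemma sign_prodCongrRight_swap {m : Type*} [Fintype m] [DecidableEq m] :
    Equiv.Perm.sign (Equiv.prodCongrRight fun _ : m => Equiv.swap (0 : Fin 2) 1) =
      (-1) ^ Fintype.card m := by
  simp [Equiv.Perm.sign_prodCongrRight]

lemma det_blockDiagonal_submatrix_swap {m R : Type*} [Fintype m] [DecidableEq m] [CommRing R]
    (M : Fin 2 → Matrix m m R) :
    ((blockDiagonal M).submatrix (Equiv.prodCongrRight fun _ => Equiv.swap 0 1) id).det =
      (-1) ^ Fintype.card m * (M 0).det * (M 1).det := by
  rw [det_permute, sign_prodCongrRight_swap, det_blockDiagonal, Fin.prod_univ_two, mul_assoc]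
  push_cast
  rfl

noncomputable def toeplitzMatrix (t : ℂ → ℂ) (N : ℕ) : Matrix (Fin N) (Fin N) ℂ :=
  Matrix.of fun m n => symbolCoeff t ((m : ℤ) - (n : ℤ))

lemma blockToeplitzMatrix_offDiagonal_eq_submatrix_blockDiagonal (u : ℂ → ℂ) (N : ℕ) :
    (Matrix.of fun p q : Fin N × Fin 2 =>
      blockSymbolCoeff (fun w => !![0, u w; -(u w⁻¹), 0]) ((p.1 : ℤ) - (q.1 : ℤ)) p.2 q.2) =
    (blockDiagonal ![-(toeplitzMatrix u N)ᵀ, toeplitzMatrix u N]).submatrix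
      (Equiv.prodCongrRight fun _ => Equiv.swap 0 1) id := by
  ext ⟨m, i⟩ ⟨n, j⟩
  fin_cases i <;> fin_cases j <;>
    simp [blockSymbolCoeff, blockDiagonal_apply, toeplitzMatrix, symbolCoeff_zero,
      symbolCoeff_neg, symbolCoeff_comp_inv]

theorem block_toeplitz_offdiagonal_factorization_general
    (u : ℂ → ℂ)
    (N : ℕ) :
    blockToeplitzDet (fun w => !![0, u w; -(u w⁻¹), 0]) N = (toeplitzDet u N) ^ 2 := by
  have hdet : toeplitzDet u N = (toeplitzMatrix u N).det := rfl
  rw [blockToeplitzDet, blockToeplitzMatrix_offDiagonal_eq_submatrix_blockDiagonal, det_blockDiagonal_submatrix_swap, hdet]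
  simp only [Matrix.cons_val_zero, Matrix.cons_val_one, det_neg, det_transpose, Fintype.card_fin]
  have sign_sq : ((-1 : ℂ) ^ N) * (-1) ^ N = 1 := by rw [← mul_pow]; norm_num
  linear_combination (toeplitzMatrix u N).det ^ 2 * sign_sq

/-- Factorization of the block Toeplitz determinant with off-diagonal symbol
`Φ(e^{iθ}) = [[0, u(e^{iθ})], [−u(e^{−iθ}), 0]]`: one has `D_N[Φ] = (D_N[u])²`. -/
theorem block_toeplitz_offdiagonal_factorization
    (u : ℂ → ℂ)
    (hu : IntervalIntegrable (fun θ : ℝ => u (Complex.exp (Complex.I * (θ : ℂ))))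
      MeasureTheory.volume 0 (2 * Real.pi))
    (N : ℕ) (hN : 1 ≤ N) :
    blockToeplitzDet (fun w => !![0, u w; -(u w⁻¹), 0]) N = (toeplitzDet u N) ^ 2 :=
  block_toeplitz_offdiagonal_factorization_general u N
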